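/- Let N and S be finite-dimensional Hilbert spaces and let f : (N⊗N) ⊗ (N⊗N⊗S⊗S⊗N⊗N) ⊗ (N⊗N) → S⊗S be the map applying the evaluation (cap) contractions ε ⊗ 1 ⊗ ε on the first and last noun wires. If ρ ≺ σ, α ≺ β, and δ ≺ γ (where ≺ means support inclusion of the corresponding positive operators), then f(ρ ⊗ α ⊗ δ) ≺ f(σ ⊗ β ⊗ γ), i.e., supp(f(ρ⊗α⊗δ)) ⊆ supp(f(σ⊗β⊗γ)). -/

import Mathlib

open scoped ComplexOrder

/-- The support of a matrix: the orthogonal complement of its kernel. -/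
noncomputable def suppM {ι : Type*} [Fintype ι] [DecidableEq ι] (A : Matrix ι ι ℂ) :
    Submodule ℂ (EuclideanSpace ℂ ι) :=
  (LinearMap.ker (Matrix.toEuclideanLin A))ᗮ

/-- The from-meanings-of-words-to-the-meaning-of-the-sentence map for a transitive
sentence: contract the subject and object noun wires of the verb density matrix `α`
against `ρ` and `δ`.  On simple tensors `α = a ⊗ s ⊗ b` it gives
`tr(ρᵀ a) · tr(δᵀ b) · s`. -/
noncomputable def contractF {n s : ℕ} (ρ : Matrix (Fin n) (Fin n) ℂ)
    (α : Matrix (Fin n × Fin s × Fin n) (Fin n × Fin s × Fin n) ℂ)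
    (δ : Matrix (Fin n) (Fin n) ℂ) : Matrix (Fin s) (Fin s) ℂ :=
  Matrix.of fun j j' => ∑ i, ∑ i', ∑ k, ∑ k', ρ i i' * δ k k' * α (i, j, k) (i', j', k')


/-! The quadratic form of `contractF ρ α δ` at `x` is `tr((ρᵀ ⊗ x x* ⊗ δᵀ) α)`, the trace of a
product of two positive matrices. Hence `contractF` preserves positivity, and `x` lies in the
kernel of `contractF σ β γ` iff `(σᵀ ⊗ x x* ⊗ γᵀ) β = 0`. For Hermitian matrices the support is
the range, so the support inclusions give factorisations `ρ = σ X`, `δ = γ Y`, `α = β Z`, and then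
`(ρᵀ ⊗ x x* ⊗ δᵀ) α = (Xᵀ ⊗ 1 ⊗ Yᵀ) (σᵀ ⊗ x x* ⊗ γᵀ) β Z = 0`: the kernel of `contractF σ β γ` is
contained in that of `contractF ρ α δ`. -/

open Matrix
open scoped Kronecker MatrixOrder

namespace Matrix

section trace

variable {𝕜 m n p : Type*} [RCLike 𝕜] [Fintype m] [Fintype n] [Fintype p]

theorem trace_conjTranspose_mul_self_mul_conjTranspose_mul_self (X : Matrix n m 𝕜)
    (Y : Matrix p m 𝕜) :
    (Xᴴ * X * (Yᴴ * Y)).trace = ((Y * Xᴴ)ᴴ * (Y * Xᴴ)).trace := by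
  rw [conjTranspose_mul, conjTranspose_conjTranspose, ← trace_mul_cycle]
  simp only [Matrix.mul_assoc]

theorem PosSemidef.trace_mul_nonneg {A B : Matrix m m 𝕜} (hA : A.PosSemidef)
    (hB : B.PosSemidef) : 0 ≤ (A * B).trace := by
  classical
  obtain ⟨X, rfl⟩ := CStarAlgebra.nonneg_iff_eq_star_mul_self.mp hA.nonneg
  obtain ⟨Y, rfl⟩ := CStarAlgebra.nonneg_iff_eq_star_mul_self.mp hB.nonneg
  rw [star_eq_conjTranspose, star_eq_conjTranspose,
    trace_conjTranspose_mul_self_mul_conjTranspose_mul_self]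
  exact (posSemidef_conjTranspose_mul_self _).trace_nonneg

theorem PosSemidef.trace_mul_eq_zero_iff {A B : Matrix m m 𝕜} (hA : A.PosSemidef)
    (hB : B.PosSemidef) : (A * B).trace = 0 ↔ A * B = 0 := by
  classical
  refine ⟨fun h => ?_, fun h => h ▸ trace_zero m 𝕜⟩
  obtain ⟨X, rfl⟩ := CStarAlgebra.nonneg_iff_eq_star_mul_self.mp hA.nonneg
  obtain ⟨Y, rfl⟩ := CStarAlgebra.nonneg_iff_eq_star_mul_self.mp hB.nonneg
  rw [star_eq_conjTranspose, star_eq_conjTranspose,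
    trace_conjTranspose_mul_self_mul_conjTranspose_mul_self,
    trace_conjTranspose_mul_self_eq_zero_iff] at h
  calc Xᴴ * X * (Yᴴ * Y) = Xᴴ * (Y * Xᴴ)ᴴ * Y := by
        simp only [conjTranspose_mul, conjTranspose_conjTranspose, Matrix.mul_assoc]
    _ = 0 := by rw [h, conjTranspose_zero, Matrix.mul_zero, Matrix.zero_mul]

end trace

theorem exists_eq_mul_of_range_toLpLin_le {R m n p : Type*} [CommRing R] [Fintype n] [Fintype p]
    [DecidableEq n] [DecidableEq p] {r s t : ENNReal} {A : Matrix m p R} {B : Matrix m n R}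
    (h : LinearMap.range (toLpLin r t A) ≤ LinearMap.range (toLpLin s t B)) :
    ∃ X : Matrix n p R, A = B * X := by
  have := Module.Projective.of_equiv (WithLp.linearEquiv r R (p → R)).symm
  obtain ⟨g, hg⟩ := Module.projective_lifting_property (toLpLin s t B).rangeRestrict
    ((toLpLin r t A).codRestrict _ fun v => h ⟨v, rfl⟩) (LinearMap.surjective_rangeRestrict _)
  obtain ⟨X, rfl⟩ := (toLpLin r s).surjective g
  refine ⟨X, (toLpLin r t).injective ?_⟩
  rw [toLpLin_mul r s t]
  exact congrArg ((LinearMap.range _).subtype ∘ₗ ·) hg.symm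

section suppM

variable {n : Type*} [Fintype n] [DecidableEq n] {A B : Matrix n n ℂ}

theorem IsHermitian.suppM_eq_range (hA : A.IsHermitian) :
    suppM A = LinearMap.range A.toEuclideanLin := by
  rw [suppM, LinearMap.orthogonal_ker, ← toEuclideanLin_conjTranspose_eq_adjoint, hA.eq]

theorem IsHermitian.exists_eq_mul_of_suppM_le (hA : A.IsHermitian) (hB : B.IsHermitian)
    (h : suppM A ≤ suppM B) : ∃ X : Matrix n n ℂ, A = B * X :=
  exists_eq_mul_of_range_toLpLin_le (hA.suppM_eq_range ▸ hB.suppM_eq_range ▸ h)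

end suppM

end Matrix

section contractF

variable {n s : ℕ}

theorem conjTranspose_contractF (ρ δ : Matrix (Fin n) (Fin n) ℂ)
    (α : Matrix (Fin n × Fin s × Fin n) (Fin n × Fin s × Fin n) ℂ) :
    (contractF ρ α δ)ᴴ = contractF ρᴴ αᴴ δᴴ := by
  ext j j'
  simp only [contractF, conjTranspose_apply, of_apply, star_sum, star_mul']
  rw [Finset.sum_comm]
  refine Finset.sum_congr rfl fun i _ => Finset.sum_congr rfl fun i' _ => ?_
  rw [Finset.sum_comm]

theorem dotProduct_contractF_mulVec (ρ δ : Matrix (Fin n) (Fin n) ℂ)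
    (α : Matrix (Fin n × Fin s × Fin n) (Fin n × Fin s × Fin n) ℂ) (x y : Fin s → ℂ) :
    star y ⬝ᵥ contractF ρ α δ *ᵥ x
      = ((ρᵀ ⊗ₖ (vecMulVec x (star y) ⊗ₖ δᵀ)) * α).trace := by
  simp only [dotProduct, mulVec, contractF, of_apply, trace, diag_apply, mul_apply,
    Fintype.sum_prod_type, kroneckerMap_apply, transpose_apply, vecMulVec_apply, Pi.star_apply,
    Finset.mul_sum, Finset.sum_mul]
  simp only [← Fintype.sum_prod_type']
  exact Fintype.sum_equiv
    { toFun := fun ⟨j, j', i, i', k, k'⟩ => (i', j', k', i, j, k)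
      invFun := fun ⟨i', j', k', i, j, k⟩ => (j, j', i, i', k, k')
      left_inv := fun _ => rfl
      right_inv := fun _ => rfl } _ _ fun _ => by rw [Equiv.coe_fn_mk]; ring

theorem Matrix.PosSemidef.contractF {ρ δ : Matrix (Fin n) (Fin n) ℂ}
    {α : Matrix (Fin n × Fin s × Fin n) (Fin n × Fin s × Fin n) ℂ}
    (hρ : ρ.PosSemidef) (hα : α.PosSemidef) (hδ : δ.PosSemidef) :
    (contractF ρ α δ).PosSemidef := by
  refine .of_dotProduct_mulVec_nonneg ?_ fun x => ?_
  · rw [IsHermitian, conjTranspose_contractF, hρ.1.eq, hα.1.eq, hδ.1.eq]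
  · rw [dotProduct_contractF_mulVec]
    exact (hρ.transpose.kronecker
      ((posSemidef_vecMulVec_self_star x).kronecker hδ.transpose)).trace_mul_nonneg hα

end contractF

theorem contract_mono_supp_general {n s : ℕ}
    (ρ σ δ γ : Matrix (Fin n) (Fin n) ℂ)
    (α β : Matrix (Fin n × Fin s × Fin n) (Fin n × Fin s × Fin n) ℂ)
    (hρ : ρ.PosSemidef) (hσ : σ.PosSemidef) (hδ : δ.PosSemidef) (hγ : γ.PosSemidef)
    (hα : α.PosSemidef) (hβ : β.PosSemidef)
    (h1 : suppM ρ ≤ suppM σ) (h2 : suppM α ≤ suppM β) (h3 : suppM δ ≤ suppM γ) :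
    suppM (contractF ρ α δ) ≤ suppM (contractF σ β γ) := by
  have hF := hρ.contractF hα hδ
  obtain ⟨X, rfl⟩ := hρ.1.exists_eq_mul_of_suppM_le hσ.1 h1
  obtain ⟨Y, rfl⟩ := hδ.1.exists_eq_mul_of_suppM_le hγ.1 h3
  obtain ⟨Z, rfl⟩ := hα.1.exists_eq_mul_of_suppM_le hβ.1 h2
  refine Submodule.orthogonal_le fun v hv => ?_
  replace hv : contractF σ β γ *ᵥ v.ofLp = 0 := congrArg WithLp.ofLp hv
  set x := v.ofLp
  set W := vecMulVec x (star x)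
  have hQ : (σᵀ ⊗ₖ (W ⊗ₖ γᵀ)) * β = 0 := by
    rw [← (hσ.transpose.kronecker ((posSemidef_vecMulVec_self_star x).kronecker
      hγ.transpose)).trace_mul_eq_zero_iff hβ, ← dotProduct_contractF_mulVec, hv, dotProduct_zero]
  have hP : ((σ * X)ᵀ ⊗ₖ (W ⊗ₖ (γ * Y)ᵀ)) * (β * Z) = 0 := by
    rw [transpose_mul, transpose_mul, ← Matrix.one_mul W, mul_kronecker_mul, mul_kronecker_mul,
      Matrix.mul_assoc, ← Matrix.mul_assoc _ β, hQ, Matrix.zero_mul, Matrix.mul_zero]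
  have hxF : contractF (σ * X) (β * Z) (γ * Y) *ᵥ x = 0 := by
    rw [← hF.dotProduct_mulVec_zero_iff, dotProduct_contractF_mulVec, hP, trace_zero]
  exact congrArg (WithLp.toLp 2) hxF

/-- Monotonicity of the sentence-meaning map with respect to the entailment preorder
`ρ ≺ σ ↔ supp ρ ⊆ supp σ`: entailment of the words yields entailment of the sentences. -/
theorem contract_mono_supp {n s : ℕ}
    (ρ σ δ γ : Matrix (Fin n) (Fin n) ℂ)
    (α β : Matrix (Fin n × Fin s × Fin n) (Fin n × Fin s × Fin n) ℂ)
    (hρ : ρ.PosSemidef) (hσ : σ.PosSemidef) (hδ : δ.PosSemidef) (hγ : γ.PosSemidef)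
    (hα : α.PosSemidef) (hβ : β.PosSemidef)
    (hρ1 : ρ.trace = 1) (hσ1 : σ.trace = 1) (hδ1 : δ.trace = 1) (hγ1 : γ.trace = 1)
    (hα1 : α.trace = 1) (hβ1 : β.trace = 1)
    (h1 : suppM ρ ≤ suppM σ) (h2 : suppM α ≤ suppM β) (h3 : suppM δ ≤ suppM γ) :
    suppM (contractF ρ α δ) ≤ suppM (contractF σ β γ) :=
  contract_mono_supp_general ρ σ δ γ α β hρ hσ hδ hγ hα hβ h1 h2 h3
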